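/- arXiv:2507.08091 — 6 statements merged into one kernel-verified Lean document; each statement's English description precedes it below -/
import Mathlib

section
/- Let G ∈ ℝ^{m×n}, let L ∈ ℝ^{m×r} and R ∈ ℝ^{n×r} be arbitrary matrices, and let α₁, α₂, α₃ ∈ ℝ. Define Proj_{(L,R)}(G) = α₁ L Lᵀ G + α₂ G R Rᵀ + α₃ L Lᵀ G R Rᵀ. Let U_L and U_R be matrices with orthonormal columns whose column spaces equal the column spaces of L and R respectively. Then the projection residual satisfies ‖Proj_{(L,R)}(G) − G‖_F ≥ ‖(I_m − U_L U_Lᵀ) G (I_n − U_R U_Rᵀ)‖_F. Moreover, if Lᵀ L = Rᵀ R = I_r and (α₁, α₂, α₃) = (1, 1, −1), then equality holds: ‖Proj_{(L,R)}(G) − G‖_F = ‖(I_m − L Lᵀ) G (I_n − R Rᵀ)‖_F. -/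
open Matrix

noncomputable def frobNorm {m n : ℕ} (A : Matrix (Fin m) (Fin n) ℝ) : ℝ :=
  Real.sqrt (∑ i, ∑ j, (A i j) ^ 2)

/-- The generalized two-sided sketch projection
`Proj_{(L,R)}(G) = α₁ L Lᵀ G + α₂ G R Rᵀ + α₃ L Lᵀ G R Rᵀ`. -/
noncomputable def sketchProj {m n r : ℕ} (L : Matrix (Fin m) (Fin r) ℝ)
    (R : Matrix (Fin n) (Fin r) ℝ) (α₁ α₂ α₃ : ℝ) (G : Matrix (Fin m) (Fin n) ℝ) :
    Matrix (Fin m) (Fin n) ℝ :=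
  α₁ • (L * Lᵀ * G) + α₂ • (G * R * Rᵀ) + α₃ • (L * Lᵀ * G * R * Rᵀ)

noncomputable def fsq {m n : ℕ} (A : Matrix (Fin m) (Fin n) ℝ) : ℝ :=
  ∑ i, ∑ j, (A i j) ^ 2

lemma frobNorm_eq {m n : ℕ} (A : Matrix (Fin m) (Fin n) ℝ) :
    frobNorm A = Real.sqrt (fsq A) := rfl

lemma fsq_trace {m n : ℕ} (A : Matrix (Fin m) (Fin n) ℝ) :
    fsq A = (Aᵀ * A).trace := by
  simp only [fsq, Matrix.trace, Matrix.diag, Matrix.mul_apply, Matrix.transpose_apply, sq]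
  exact Finset.sum_comm

lemma fsq_nonneg {m n : ℕ} (A : Matrix (Fin m) (Fin n) ℝ) : 0 ≤ fsq A := by
  unfold fsq; positivity

lemma fsq_transpose {m n : ℕ} (A : Matrix (Fin m) (Fin n) ℝ) :
    fsq Aᵀ = fsq A := by
  simp only [fsq, Matrix.transpose_apply]; exact Finset.sum_comm

lemma fsq_neg {m n : ℕ} (A : Matrix (Fin m) (Fin n) ℝ) : fsq (-A) = fsq A := by
  simp [fsq]

lemma left_le {m k n : ℕ} (U : Matrix (Fin m) (Fin k) ℝ) (hU : Uᵀ * U = 1)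
    (A : Matrix (Fin m) (Fin n) ℝ) :
    fsq ((1 - U * Uᵀ) * A) ≤ fsq A := by
  rw [fsq_trace, fsq_trace]
  have hcancel : ∀ (B : Matrix (Fin k) (Fin n) ℝ), Uᵀ * (U * B) = B := fun B => by
    rw [← Matrix.mul_assoc, hU, Matrix.one_mul]
  have h1 : ((1 - U * Uᵀ) * A)ᵀ * ((1 - U * Uᵀ) * A)
      = Aᵀ * A - (Uᵀ * A)ᵀ * (Uᵀ * A) := by
    simp only [Matrix.transpose_mul, Matrix.transpose_sub, Matrix.transpose_one,
      Matrix.transpose_transpose, Matrix.sub_mul, Matrix.mul_sub, Matrix.one_mul,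
      Matrix.mul_one, Matrix.mul_assoc, hcancel]
    abel
  rw [h1, Matrix.trace_sub]
  have h2 := fsq_nonneg (Uᵀ * A)
  rw [fsq_trace] at h2
  linarith

lemma right_le {p k q : ℕ} (U : Matrix (Fin q) (Fin k) ℝ) (hU : Uᵀ * U = 1)
    (A : Matrix (Fin p) (Fin q) ℝ) :
    fsq (A * (1 - U * Uᵀ)) ≤ fsq A := by
  have e : (A * (1 - U * Uᵀ))ᵀ = (1 - U * Uᵀ) * Aᵀ := by
    simp [Matrix.transpose_mul, Matrix.transpose_sub, Matrix.mul_assoc]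
  calc fsq (A * (1 - U * Uᵀ)) = fsq ((1 - U * Uᵀ) * Aᵀ) := by rw [← fsq_transpose, e]
    _ ≤ fsq Aᵀ := left_le U hU Aᵀ
    _ = fsq A := fsq_transpose A

lemma annihilate {m k r : ℕ} (U : Matrix (Fin m) (Fin k) ℝ) (hU : Uᵀ * U = 1)
    (L : Matrix (Fin m) (Fin r) ℝ)
    (h : LinearMap.range L.mulVecLin = LinearMap.range U.mulVecLin) :
    (1 - U * Uᵀ) * L = 0 := by
  have hPU : (1 - U * Uᵀ) * U = 0 := by
    rw [Matrix.sub_mul, Matrix.one_mul, Matrix.mul_assoc, hU, Matrix.mul_one, sub_self]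
  ext i j
  have hmem : L.mulVecLin (Pi.single j 1) ∈ LinearMap.range U.mulVecLin := by
    rw [← h]; exact LinearMap.mem_range_self _ _
  obtain ⟨w, hw⟩ := hmem
  have hz : ((1 - U * Uᵀ) * L) *ᵥ Pi.single j 1 = 0 := by
    rw [← Matrix.mulVec_mulVec]
    have hL : L *ᵥ Pi.single j 1 = U *ᵥ w := by
      simpa [Matrix.mulVecLin_apply] using hw.symm
    rw [hL, Matrix.mulVec_mulVec, hPU, Matrix.zero_mulVec]
  have h2 := congrFun hz i
  simpa using h2

theorem sketch_projection_residual_lower_bound_and_optimality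
    {m n r rL rR : ℕ}
    (G : Matrix (Fin m) (Fin n) ℝ)
    (L : Matrix (Fin m) (Fin r) ℝ) (R : Matrix (Fin n) (Fin r) ℝ)
    (α₁ α₂ α₃ : ℝ)
    (UL : Matrix (Fin m) (Fin rL) ℝ) (UR : Matrix (Fin n) (Fin rR) ℝ)
    (hUL : ULᵀ * UL = 1) (hUR : URᵀ * UR = 1)
    (hLrange : LinearMap.range L.mulVecLin = LinearMap.range UL.mulVecLin)
    (hRrange : LinearMap.range R.mulVecLin = LinearMap.range UR.mulVecLin) :
    frobNorm ((1 - UL * ULᵀ) * G * (1 - UR * URᵀ))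
        ≤ frobNorm (sketchProj L R α₁ α₂ α₃ G - G)
    ∧ (Lᵀ * L = 1 → Rᵀ * R = 1 → α₁ = 1 → α₂ = 1 → α₃ = -1 →
        frobNorm (sketchProj L R α₁ α₂ α₃ G - G)
          = frobNorm ((1 - L * Lᵀ) * G * (1 - R * Rᵀ))) := by
  constructor
  · -- lower bound
    have hPL := annihilate UL hUL L hLrange
    have hQR := annihilate UR hUR R hRrange
    have hRt : Rᵀ * (1 - UR * URᵀ) = 0 := by
      have := congrArg Matrix.transpose hQR
      simpa [Matrix.transpose_mul, Matrix.transpose_sub] using this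
    have hPL' : ∀ {p : ℕ} (C : Matrix (Fin r) (Fin p) ℝ),
        (1 - UL * ULᵀ) * (L * C) = 0 := fun C => by
      rw [← Matrix.mul_assoc, hPL, Matrix.zero_mul]
    set X := sketchProj L R α₁ α₂ α₃ G - G with hX
    have hS : (1 - UL * ULᵀ) * sketchProj L R α₁ α₂ α₃ G * (1 - UR * URᵀ) = 0 := by
      unfold sketchProj
      simp only [Matrix.mul_add, Matrix.add_mul, Matrix.mul_smul, Matrix.smul_mul,
        Matrix.mul_assoc, hPL', hRt, Matrix.mul_zero, Matrix.zero_mul, smul_zero,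
        add_zero, zero_add]
    have gen : ∀ (A : Matrix (Fin m) (Fin m) ℝ) (B : Matrix (Fin n) (Fin n) ℝ)
        (S : Matrix (Fin m) (Fin n) ℝ), A * S * B = 0 →
        A * (S - G) * B = -(A * G * B) := by
      intro A B S h
      rw [Matrix.mul_sub, Matrix.sub_mul, h, zero_sub]
    have key : (1 - UL * ULᵀ) * X * (1 - UR * URᵀ)
        = -((1 - UL * ULᵀ) * G * (1 - UR * URᵀ)) := by
      rw [hX]; exact gen _ _ _ hS
    have hfsq : fsq ((1 - UL * ULᵀ) * G * (1 - UR * URᵀ)) ≤ fsq X := by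
      calc fsq ((1 - UL * ULᵀ) * G * (1 - UR * URᵀ))
          = fsq ((1 - UL * ULᵀ) * X * (1 - UR * URᵀ)) := by rw [key, fsq_neg]
        _ ≤ fsq (X * (1 - UR * URᵀ)) := by
            rw [Matrix.mul_assoc]
            exact left_le UL hUL _
        _ ≤ fsq X := right_le UR hUR X
    rw [frobNorm_eq, frobNorm_eq]
    exact Real.sqrt_le_sqrt hfsq
  · -- equality case
    intro hL hR h1 h2 h3
    subst h1; subst h2; subst h3
    have e : sketchProj L R 1 1 (-1) G - G
        = -((1 - L * Lᵀ) * G * (1 - R * Rᵀ)) := by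
      unfold sketchProj
      simp only [one_smul, neg_smul, Matrix.sub_mul, Matrix.mul_sub, Matrix.one_mul,
        Matrix.mul_one, Matrix.mul_assoc]
      abel
    rw [e, frobNorm_eq, frobNorm_eq, fsq_neg]
end

section
/- Let U ∈ ℝ^{m×r} and V ∈ ℝ^{n×r} be semi-orthogonal matrices, and define the tangent-space set T = { U M Vᵀ + U_p Vᵀ + U V_pᵀ : M ∈ ℝ^{r×r}, U_p ∈ ℝ^{m×r}, V_p ∈ ℝ^{n×r}, Uᵀ U_p = 0, Vᵀ V_p = 0 }. Then for any G ∈ ℝ^{m×n}, the matrix Ĝ = U Uᵀ G + G V Vᵀ − U Uᵀ G V Vᵀ belongs to T and minimizes the Frobenius distance to G over T: for every X ∈ T, ‖Ĝ − G‖_F ≤ ‖X − G‖_F. -/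
open Matrix

/-- Membership in the tangent space
`T = { U M Vᵀ + U_p Vᵀ + U V_pᵀ : Uᵀ U_p = 0, Vᵀ V_p = 0 }`. -/
def memTangent {m n r : ℕ} (U : Matrix (Fin m) (Fin r) ℝ) (V : Matrix (Fin n) (Fin r) ℝ)
    (X : Matrix (Fin m) (Fin n) ℝ) : Prop :=
  ∃ (M : Matrix (Fin r) (Fin r) ℝ) (Up : Matrix (Fin m) (Fin r) ℝ)
    (Vp : Matrix (Fin n) (Fin r) ℝ),
    Uᵀ * Up = 0 ∧ Vᵀ * Vp = 0 ∧ X = U * M * Vᵀ + Up * Vᵀ + U * Vpᵀ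

lemma trace_transpose_mul_eq {m n : ℕ} (A B : Matrix (Fin m) (Fin n) ℝ) :
    trace (Aᵀ * B) = ∑ i, ∑ j, A i j * B i j := by
  simp only [Matrix.trace, Matrix.diag, Matrix.mul_apply, Matrix.transpose_apply]
  rw [Finset.sum_comm]

theorem tangent_space_projection_optimal
    {m n r : ℕ} (U : Matrix (Fin m) (Fin r) ℝ) (V : Matrix (Fin n) (Fin r) ℝ)
    (hU : Uᵀ * U = 1) (hV : Vᵀ * V = 1)
    (G : Matrix (Fin m) (Fin n) ℝ) :
    memTangent U V (U * Uᵀ * G + G * V * Vᵀ - U * Uᵀ * G * V * Vᵀ)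
    ∧ ∀ X : Matrix (Fin m) (Fin n) ℝ, memTangent U V X →
        frobNorm (U * Uᵀ * G + G * V * Vᵀ - U * Uᵀ * G * V * Vᵀ - G)
          ≤ frobNorm (X - G) := by
  classical
  have hPU : ((1 : Matrix (Fin m) (Fin m) ℝ) - U * Uᵀ) * U = 0 := by
    rw [Matrix.sub_mul, Matrix.one_mul, Matrix.mul_assoc, hU, Matrix.mul_one, sub_self]
  have hQV : ((1 : Matrix (Fin n) (Fin n) ℝ) - V * Vᵀ) * V = 0 := by
    rw [Matrix.sub_mul, Matrix.one_mul, Matrix.mul_assoc, hV, Matrix.mul_one, sub_self]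
  have hPt : ((1 : Matrix (Fin m) (Fin m) ℝ) - U * Uᵀ)ᵀ = 1 - U * Uᵀ := by
    simp [transpose_sub, transpose_mul]
  have hQt : ((1 : Matrix (Fin n) (Fin n) ℝ) - V * Vᵀ)ᵀ = 1 - V * Vᵀ := by
    simp [transpose_sub, transpose_mul]
  have hUP : Uᵀ * ((1 : Matrix (Fin m) (Fin m) ℝ) - U * Uᵀ) = 0 := by
    have h := congrArg Matrix.transpose hPU
    simpa [transpose_mul, hPt] using h
  have hVQ : Vᵀ * ((1 : Matrix (Fin n) (Fin n) ℝ) - V * Vᵀ) = 0 := by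
    have h := congrArg Matrix.transpose hQV
    simpa [transpose_mul, hQt] using h
  set P : Matrix (Fin m) (Fin m) ℝ := 1 - U * Uᵀ with hP
  set Q : Matrix (Fin n) (Fin n) ℝ := 1 - V * Vᵀ with hQ
  -- the candidate decomposition of Ĝ
  set M0 : Matrix (Fin r) (Fin r) ℝ := Uᵀ * G * V with hM0
  set Up0 : Matrix (Fin m) (Fin r) ℝ := P * G * V with hUp0
  set Vp0 : Matrix (Fin n) (Fin r) ℝ := Q * Gᵀ * U with hVp0
  have hUUp0 : Uᵀ * Up0 = 0 := by
    rw [hUp0, ← Matrix.mul_assoc, ← Matrix.mul_assoc, hUP, Matrix.zero_mul, Matrix.zero_mul]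
  have hVVp0 : Vᵀ * Vp0 = 0 := by
    rw [hVp0, ← Matrix.mul_assoc, ← Matrix.mul_assoc, hVQ, Matrix.zero_mul, Matrix.zero_mul]
  have hGhat : U * M0 * Vᵀ + Up0 * Vᵀ + U * Vp0ᵀ
      = U * Uᵀ * G + G * V * Vᵀ - U * Uᵀ * G * V * Vᵀ := by
    have ht : Vp0ᵀ = Uᵀ * (G * Q) := by
      rw [hVp0, transpose_mul, transpose_mul, hQt, transpose_transpose]
    rw [ht, hM0, hUp0, hP, hQ]
    simp only [Matrix.sub_mul, Matrix.mul_sub, Matrix.add_mul, Matrix.mul_add,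
      Matrix.one_mul, Matrix.mul_one, Matrix.mul_assoc]
    abel
  have hE : U * Uᵀ * G + G * V * Vᵀ - U * Uᵀ * G * V * Vᵀ - G = -(P * G * Q) := by
    rw [hP, hQ]
    simp only [Matrix.sub_mul, Matrix.mul_sub, Matrix.one_mul, Matrix.mul_one,
      Matrix.mul_assoc, neg_sub]
    abel
  -- orthogonality key lemma
  have key : ∀ (M : Matrix (Fin r) (Fin r) ℝ) (Up : Matrix (Fin m) (Fin r) ℝ)
      (Vp : Matrix (Fin n) (Fin r) ℝ), Uᵀ * Up = 0 → Vᵀ * Vp = 0 →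
      trace ((P * G * Q)ᵀ * (U * M * Vᵀ + Up * Vᵀ + U * Vpᵀ)) = 0 := by
    intro M Up Vp hUp hVp
    have hPUp : P * Up = Up := by
      rw [hP, Matrix.sub_mul, Matrix.one_mul, Matrix.mul_assoc, hUp, Matrix.mul_zero, sub_zero]
    have hA : (P * G * Q)ᵀ = Q * (Gᵀ * P) := by
      rw [transpose_mul, transpose_mul, hPt, hQt]
    rw [hA, Matrix.mul_add, Matrix.mul_add, trace_add, trace_add]
    have t1 : Q * (Gᵀ * P) * (U * M * Vᵀ) = 0 := by
      simp only [Matrix.mul_assoc]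
      rw [← Matrix.mul_assoc P U, hPU, Matrix.zero_mul, Matrix.mul_zero, Matrix.mul_zero]
    have t3 : Q * (Gᵀ * P) * (U * Vpᵀ) = 0 := by
      simp only [Matrix.mul_assoc]
      rw [← Matrix.mul_assoc P U, hPU, Matrix.zero_mul, Matrix.mul_zero, Matrix.mul_zero]
    have t2 : trace (Q * (Gᵀ * P) * (Up * Vᵀ)) = 0 := by
      have h1 : Q * (Gᵀ * P) * (Up * Vᵀ) = Q * (Gᵀ * (Up * Vᵀ)) := by
        simp only [Matrix.mul_assoc]
        rw [← Matrix.mul_assoc P Up, hPUp]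
      rw [h1, trace_mul_comm]
      have h2 : Gᵀ * (Up * Vᵀ) * Q = Gᵀ * (Up * (Vᵀ * Q)) := by simp only [Matrix.mul_assoc]
      rw [h2, hVQ]; simp
    rw [t1, t3, t2]; simp
  refine ⟨⟨M0, Up0, Vp0, hUUp0, hVVp0, hGhat.symm⟩, ?_⟩
  intro X hX
  obtain ⟨M, Up, Vp, hUp, hVp, hXeq⟩ := hX
  set D : Matrix (Fin m) (Fin n) ℝ :=
    X - (U * Uᵀ * G + G * V * Vᵀ - U * Uᵀ * G * V * Vᵀ) with hDdef
  have hDG : X - G = D + (U * Uᵀ * G + G * V * Vᵀ - U * Uᵀ * G * V * Vᵀ - G) := by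
    rw [hDdef]; abel
  have hDdec : D = U * (M - M0) * Vᵀ + (Up - Up0) * Vᵀ + U * (Vp - Vp0)ᵀ := by
    rw [hDdef, ← hGhat, hXeq]
    simp only [Matrix.sub_mul, Matrix.mul_sub, Matrix.add_mul, Matrix.mul_add,
      transpose_sub, Matrix.mul_assoc]
    abel
  have hcross : trace ((U * Uᵀ * G + G * V * Vᵀ - U * Uᵀ * G * V * Vᵀ - G)ᵀ * D) = 0 := by
    have h0 : trace ((P * G * Q)ᵀ * D) = 0 := by
      rw [hDdec]
      exact key _ _ _ (by rw [Matrix.mul_sub, hUp, hUUp0, sub_self])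
        (by rw [Matrix.mul_sub, hVp, hVVp0, sub_self])
    rw [hE, transpose_neg, Matrix.neg_mul, trace_neg, h0, neg_zero]
  set E : Matrix (Fin m) (Fin n) ℝ :=
    U * Uᵀ * G + G * V * Vᵀ - U * Uᵀ * G * V * Vᵀ - G with hEdef
  have hcross' : ∑ i, ∑ j, D i j * E i j = 0 := by
    have h1 := trace_transpose_mul_eq E D
    have hsym : ∑ i, ∑ j, E i j * D i j = ∑ i, ∑ j, D i j * E i j := by
      apply Finset.sum_congr rfl; intros; apply Finset.sum_congr rfl; intros; ring
    rw [← hsym, ← h1]; exact hcross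
  -- Pythagoras
  have hsum : ∑ i, ∑ j, ((X - G) i j) ^ 2
      = (∑ i, ∑ j, (D i j) ^ 2) + ∑ i, ∑ j, (E i j) ^ 2 := by
    have expand : ∀ i j, ((X - G) i j) ^ 2
        = (D i j) ^ 2 + 2 * (D i j * E i j) + (E i j) ^ 2 := by
      intro i j
      have h2 : (X - G) i j = D i j + E i j := by rw [hDG]; simp [Matrix.add_apply]
      rw [h2]; ring
    calc ∑ i, ∑ j, ((X - G) i j) ^ 2
        = ∑ i, ∑ j, ((D i j) ^ 2 + 2 * (D i j * E i j) + (E i j) ^ 2) := by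
          apply Finset.sum_congr rfl; intros i _; apply Finset.sum_congr rfl; intros j _
          exact expand i j
      _ = (∑ i, ∑ j, (D i j) ^ 2) + 2 * (∑ i, ∑ j, D i j * E i j)
            + ∑ i, ∑ j, (E i j) ^ 2 := by
          simp [Finset.sum_add_distrib, Finset.mul_sum]
      _ = (∑ i, ∑ j, (D i j) ^ 2) + ∑ i, ∑ j, (E i j) ^ 2 := by
          rw [hcross']; ring
  have hDnonneg : 0 ≤ ∑ i, ∑ j, (D i j) ^ 2 :=
    Finset.sum_nonneg fun i _ => Finset.sum_nonneg fun j _ => sq_nonneg _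
  show frobNorm E ≤ frobNorm (X - G)
  unfold frobNorm
  apply Real.sqrt_le_sqrt
  rw [hsum]
  linarith
end

section
/- Let U ∈ ℝ^{m×r} and V ∈ ℝ^{n×r} be semi-orthogonal, Σ ∈ ℝ^{r×r} be any matrix, G ∈ ℝ^{m×n}, and β ∈ ℝ. Then the following block-matrix identity holds: U Uᵀ G + G V Vᵀ − U Uᵀ G V Vᵀ + β U Σ Vᵀ = [U, G V] · [[β Σ − Uᵀ G V, I_r], [I_r, 0_r]] · [V, Gᵀ U]ᵀ, where [U, G V] ∈ ℝ^{m×2r} and [V, Gᵀ U] ∈ ℝ^{n×2r} are horizontal concatenations and the middle factor is the 2r×2r block matrix with blocks β Σ − Uᵀ G V, I_r, I_r, 0_r. -/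
open Matrix

theorem momentum_update_block_identity
    {m n r : ℕ}
    (U : Matrix (Fin m) (Fin r) ℝ) (V : Matrix (Fin n) (Fin r) ℝ)
    (hU : Uᵀ * U = 1) (hV : Vᵀ * V = 1)
    (S : Matrix (Fin r) (Fin r) ℝ)
    (G : Matrix (Fin m) (Fin n) ℝ) (β : ℝ) :
    U * Uᵀ * G + G * V * Vᵀ - U * Uᵀ * G * V * Vᵀ + β • (U * S * Vᵀ)
      = Matrix.fromCols U (G * V)
        * (Matrix.fromBlocks (β • S - Uᵀ * G * V) 1 1 0 : Matrix (Fin r ⊕ Fin r) (Fin r ⊕ Fin r) ℝ)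
        * (Matrix.fromCols V (Gᵀ * U))ᵀ := by
  rw [transpose_fromCols, fromCols_mul_fromBlocks, fromCols_mul_fromRows]
  simp only [Matrix.mul_sub, Matrix.sub_mul, Matrix.add_mul, Matrix.mul_add, Matrix.mul_one,
    Matrix.one_mul, Matrix.mul_zero, add_zero, Matrix.zero_mul, Matrix.mul_smul, Matrix.smul_mul,
    transpose_mul, transpose_transpose, Matrix.mul_assoc]
  abel
end

section
/- Let U ∈ ℝ^{m×r}, V ∈ ℝ^{n×r}, Σ ∈ ℝ^{r×r}, G ∈ ℝ^{m×n}, and β ∈ ℝ. Then the matrix U Uᵀ G + G V Vᵀ − U Uᵀ G V Vᵀ + β U Σ Vᵀ has rank at most 2r. -/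
open Matrix

lemma matrix_rank_add_le {m n : ℕ} (A B : Matrix (Fin m) (Fin n) ℝ) :
    (A + B).rank ≤ A.rank + B.rank := by
  simp only [Matrix.rank, mulVecLin_add]
  refine le_trans (Submodule.finrank_mono ?_) (Submodule.finrank_add_le_finrank_add_finrank _ _)
  intro x hx
  obtain ⟨y, rfl⟩ := hx
  rw [mulVecLin_add, LinearMap.add_apply]
  exact Submodule.add_mem_sup (LinearMap.mem_range_self A.mulVecLin y) (LinearMap.mem_range_self B.mulVecLin y)

theorem momentum_update_rank_le_two_r
    {m n r : ℕ}
    (U : Matrix (Fin m) (Fin r) ℝ) (V : Matrix (Fin n) (Fin r) ℝ)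
    (S : Matrix (Fin r) (Fin r) ℝ)
    (G : Matrix (Fin m) (Fin n) ℝ) (β : ℝ) :
    (U * Uᵀ * G + G * V * Vᵀ - U * Uᵀ * G * V * Vᵀ + β • (U * S * Vᵀ)).rank ≤ 2 * r := by
  have h : U * Uᵀ * G + G * V * Vᵀ - U * Uᵀ * G * V * Vᵀ + β • (U * S * Vᵀ)
      = U * (Uᵀ * G - Uᵀ * G * V * Vᵀ + β • (S * Vᵀ)) + (G * V) * Vᵀ := by
    simp only [Matrix.mul_sub, Matrix.mul_add, Matrix.mul_smul, ← Matrix.mul_assoc]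
    abel
  rw [h, two_mul]
  refine (matrix_rank_add_le _ _).trans (Nat.add_le_add ?_ ?_)
  · exact (Matrix.rank_mul_le_left _ _).trans ((Matrix.rank_le_card_width U).trans (Fintype.card_fin r).le)
  · refine (Matrix.rank_mul_le_right _ _).trans ?_
    rw [Matrix.rank_transpose]
    exact (Matrix.rank_le_card_width V).trans (Fintype.card_fin r).le
end

section
/- Let U ∈ ℝ^{m×r} and V ∈ ℝ^{n×r} be semi-orthogonal matrices, let Σ ∈ ℝ^{r×r} be diagonal with nonnegative diagonal entries, and set X = U Σ Vᵀ. Then for every Y ∈ ℝ^{m×n}, the nuclear norm satisfies the subgradient inequality ‖Y‖_* ≥ ‖X‖_* + ⟨U Vᵀ, Y − X⟩, where ⟨A, B⟩ = trace(Aᵀ B). -/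
open Matrix

noncomputable def nuclearNorm {m n : ℕ} (A : Matrix (Fin m) (Fin n) ℝ) : ℝ :=
  ((Matrix.posSemidef_conjTranspose_mul_self A).1.eigenvectorUnitary.1 *
    Matrix.diagonal (RCLike.ofReal ∘ (Real.sqrt ·) ∘ (Matrix.posSemidef_conjTranspose_mul_self A).1.eigenvalues) *
    (star (Matrix.posSemidef_conjTranspose_mul_self A).1.eigenvectorUnitary : Matrix (Fin n) (Fin n) ℝ)).trace

noncomputable def Matrix.PosSemidef.sqrt {k : ℕ} {A : Matrix (Fin k) (Fin k) ℝ}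
    (hA : A.PosSemidef) : Matrix (Fin k) (Fin k) ℝ :=
  hA.1.eigenvectorUnitary.1 *
    Matrix.diagonal (RCLike.ofReal ∘ (Real.sqrt ·) ∘ hA.1.eigenvalues) *
    (star hA.1.eigenvectorUnitary : Matrix (Fin k) (Fin k) ℝ)

open scoped MatrixOrder in
lemma Matrix.PosSemidef.sqrt_eq_cfcSqrt {k : ℕ} {A : Matrix (Fin k) (Fin k) ℝ}
    (hA : A.PosSemidef) : hA.sqrt = CFC.sqrt A := by
  rw [CFC.sqrt_eq_cfc, cfc_nnreal_eq_real _ A (Matrix.nonneg_iff_posSemidef.mpr hA),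
    hA.1.cfc_eq]
  simp only [Matrix.IsHermitian.cfc, Matrix.PosSemidef.sqrt, Unitary.conjStarAlgAut_apply]
  simp only [Real.sqrt]

open scoped MatrixOrder in
lemma Matrix.PosSemidef.posSemidef_sqrt {k : ℕ} {A : Matrix (Fin k) (Fin k) ℝ}
    (hA : A.PosSemidef) : hA.sqrt.PosSemidef := by
  rw [hA.sqrt_eq_cfcSqrt]
  exact Matrix.nonneg_iff_posSemidef.mp (CFC.sqrt_nonneg A)

open scoped MatrixOrder in
lemma Matrix.PosSemidef.sqrt_mul_self {k : ℕ} {A : Matrix (Fin k) (Fin k) ℝ}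
    (hA : A.PosSemidef) : hA.sqrt * hA.sqrt = A := by
  rw [hA.sqrt_eq_cfcSqrt]
  exact CFC.sqrt_mul_sqrt_self A (Matrix.nonneg_iff_posSemidef.mpr hA)

open scoped MatrixOrder in
lemma Matrix.PosSemidef.eq_sqrt_of_sq_eq {k : ℕ} {A B : Matrix (Fin k) (Fin k) ℝ}
    (hA : A.PosSemidef) (hB : B.PosSemidef) (h : A ^ 2 = B) : A = hB.sqrt := by
  rw [hB.sqrt_eq_cfcSqrt, eq_comm, CFC.sqrt_eq_iff B A (Matrix.nonneg_iff_posSemidef.mpr hB)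
    (Matrix.nonneg_iff_posSemidef.mpr hA), ← pow_two, h]

private lemma trace_nonneg_of_psd {k : ℕ} {A : Matrix (Fin k) (Fin k) ℝ}
    (hA : A.PosSemidef) : 0 ≤ A.trace := by
  rw [Matrix.trace]
  refine Finset.sum_nonneg fun i _ => ?_
  simpa [Matrix.diag] using hA.2 (Finsupp.single i 1)

private lemma trace_mul_nonneg {k : ℕ} {A B : Matrix (Fin k) (Fin k) ℝ}
    (hA : A.PosSemidef) (hB : B.PosSemidef) : 0 ≤ (A * B).trace := by
  have hS := hA.posSemidef_sqrt
  have h2 : (hA.sqrt * B * hA.sqrt).trace = (A * B).trace := by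
    rw [Matrix.trace_mul_comm, ← Matrix.mul_assoc, hA.sqrt_mul_self]
  rw [← h2]
  apply trace_nonneg_of_psd
  have h3 := hB.mul_mul_conjTranspose_same hA.sqrt
  have h4 : (hA.sqrt)ᴴ = hA.sqrt := hS.1
  rwa [h4] at h3

private lemma trace_le_nuclear {m n : ℕ} (B Y : Matrix (Fin m) (Fin n) ℝ)
    (hB : Matrix.PosSemidef (1 - Bᵀ * B)) :
    (Bᵀ * Y).trace ≤ nuclearNorm Y := by
  set S := (Matrix.posSemidef_conjTranspose_mul_self Y).sqrt with hSdef
  have hS : S.PosSemidef := (Matrix.posSemidef_conjTranspose_mul_self Y).posSemidef_sqrt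
  have hSS : S * S = Yᵀ * Y := (Matrix.posSemidef_conjTranspose_mul_self Y).sqrt_mul_self
  have hNN : nuclearNorm Y = S.trace := rfl
  rw [hNN]
  apply le_of_forall_pos_le_add
  intro ε' hε'
  set ε : ℝ := ε' / (n + 1) with hεdef
  have hε : 0 < ε := by positivity
  set T := S + ε • (1 : Matrix (Fin n) (Fin n) ℝ) with hTdef
  have hT : T.PosDef := by
    refine Matrix.PosDef.posSemidef_add hS ?_
    rw [smul_one_eq_diagonal]
    exact posDef_diagonal_iff.mpr fun i => hε
  set W := hT.posSemidef.sqrt with hWdef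
  have hWpsd : W.PosSemidef := hT.posSemidef.posSemidef_sqrt
  have hWW : W * W = T := hT.posSemidef.sqrt_mul_self
  have hWs : Wᵀ = W := hWpsd.1
  have hTdet : IsUnit T.det := (Matrix.isUnit_iff_isUnit_det T).mp hT.isUnit
  have hWdet : IsUnit W.det := by
    have h : W.det * W.det = T.det := by rw [← Matrix.det_mul, hWW]
    exact isUnit_of_mul_isUnit_left (h ▸ hTdet)
  have hWinv : W⁻¹ * W = 1 := Matrix.nonsing_inv_mul _ hWdet
  have hWinv' : W * W⁻¹ = 1 := Matrix.mul_nonsing_inv _ hWdet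
  have hWinvT : (W⁻¹)ᵀ = W⁻¹ := by rw [Matrix.transpose_nonsing_inv, hWs]
  have hTinv : T⁻¹ = W⁻¹ * W⁻¹ := by rw [← hWW, Matrix.mul_inv_rev]
  set M := B * W - Y * W⁻¹ with hMdef
  have hM : 0 ≤ (Mᵀ * M).trace :=
    trace_nonneg_of_psd (Matrix.posSemidef_conjTranspose_mul_self M)
  have expand : Mᵀ * M
      = W * (Bᵀ * B) * W - W * (Bᵀ * Y) * W⁻¹ - W⁻¹ * (Yᵀ * B) * W
        + W⁻¹ * (Yᵀ * Y) * W⁻¹ := by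
    rw [hMdef, Matrix.transpose_sub, Matrix.transpose_mul, Matrix.transpose_mul, hWs, hWinvT,
      Matrix.sub_mul, Matrix.mul_sub, Matrix.mul_sub]
    simp only [Matrix.mul_assoc]
    abel
  have t1 : (W * (Bᵀ * B) * W).trace = (Bᵀ * B * T).trace := by
    rw [Matrix.trace_mul_comm, ← Matrix.mul_assoc, hWW, Matrix.trace_mul_comm]
  have t2 : (W * (Bᵀ * Y) * W⁻¹).trace = (Bᵀ * Y).trace := by
    rw [Matrix.trace_mul_comm, ← Matrix.mul_assoc, hWinv, Matrix.one_mul]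
  have t3 : (W⁻¹ * (Yᵀ * B) * W).trace = (Bᵀ * Y).trace := by
    rw [Matrix.trace_mul_comm, ← Matrix.mul_assoc, hWinv', Matrix.one_mul]
    calc (Yᵀ * B).trace = ((Yᵀ * B)ᵀ).trace := (Matrix.trace_transpose _).symm
      _ = (Bᵀ * Y).trace := by rw [Matrix.transpose_mul, Matrix.transpose_transpose]
  have t4 : (W⁻¹ * (Yᵀ * Y) * W⁻¹).trace = (S * S * T⁻¹).trace := by
    rw [Matrix.trace_mul_comm, ← Matrix.mul_assoc, ← hTinv, hSS, Matrix.trace_mul_comm]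
  have b1 : (Bᵀ * B * T).trace ≤ T.trace := by
    have h := trace_mul_nonneg hB hT.posSemidef
    rw [Matrix.sub_mul, Matrix.one_mul, Matrix.trace_sub] at h
    linarith
  have key : S = S * S * T⁻¹ + ε • (S * T⁻¹) := by
    have hTT : T * T⁻¹ = 1 := Matrix.mul_nonsing_inv _ hTdet
    calc S = S * (T * T⁻¹) := by rw [hTT, Matrix.mul_one]
      _ = (S * T) * T⁻¹ := by rw [Matrix.mul_assoc]
      _ = (S * S + ε • S) * T⁻¹ := by
          rw [hTdef, Matrix.mul_add, mul_smul_comm, Matrix.mul_one]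
      _ = S * S * T⁻¹ + ε • (S * T⁻¹) := by
          rw [Matrix.add_mul, smul_mul_assoc]
  have b2 : (S * S * T⁻¹).trace ≤ S.trace := by
    have h1 : 0 ≤ (S * T⁻¹).trace := trace_mul_nonneg hS hT.inv.posSemidef
    have h2 : S.trace = (S * S * T⁻¹).trace + ε * (S * T⁻¹).trace := by
      conv_lhs => rw [key]
      rw [Matrix.trace_add, Matrix.trace_smul, smul_eq_mul]
    nlinarith
  have b3 : T.trace = S.trace + ε * n := by
    rw [hTdef, Matrix.trace_add, Matrix.trace_smul, Matrix.trace_one]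
    simp [mul_comm]
  rw [expand, Matrix.trace_add, Matrix.trace_sub, Matrix.trace_sub, t1, t2, t3, t4] at hM
  have hfin : (Bᵀ * Y).trace ≤ S.trace + ε * n / 2 := by linarith
  have hlast : ε * n / 2 ≤ ε' := by
    rw [hεdef, div_mul_eq_mul_div, div_div, div_le_iff₀ (by positivity)]
    nlinarith
  linarith

private lemma cancel {a b r : ℕ} {P : Matrix (Fin a) (Fin r) ℝ} (h : Pᵀ * P = 1)
    (Z : Matrix (Fin r) (Fin b) ℝ) : Pᵀ * (P * Z) = Z := by
  rw [← Matrix.mul_assoc, h, Matrix.one_mul]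

theorem nuclearNorm_subgradient_inequality
    {m n r : ℕ}
    (U : Matrix (Fin m) (Fin r) ℝ) (V : Matrix (Fin n) (Fin r) ℝ)
    (hU : Uᵀ * U = 1) (hV : Vᵀ * V = 1)
    (d : Fin r → ℝ) (hd : ∀ i, 0 ≤ d i)
    (Y : Matrix (Fin m) (Fin n) ℝ) :
    nuclearNorm (U * Matrix.diagonal d * Vᵀ)
      + ((U * Vᵀ)ᵀ * (Y - U * Matrix.diagonal d * Vᵀ)).trace
      ≤ nuclearNorm Y := by
  set X := U * Matrix.diagonal d * Vᵀ with hXdef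
  set B := U * Vᵀ with hBdef
  set C := V * Matrix.diagonal d * Vᵀ with hCdef
  have hdd : Matrix.diagonal (fun i => Real.sqrt (d i))
      * Matrix.diagonal (fun i => Real.sqrt (d i)) = Matrix.diagonal d := by
    rw [Matrix.diagonal_mul_diagonal]
    exact congrArg Matrix.diagonal (funext fun i => Real.mul_self_sqrt (hd i))
  have hC : C.PosSemidef := by
    have h := Matrix.posSemidef_self_mul_conjTranspose
      (V * Matrix.diagonal (fun i => Real.sqrt (d i)))
    have he : (V * Matrix.diagonal (fun i => Real.sqrt (d i)))
        * (V * Matrix.diagonal (fun i => Real.sqrt (d i)))ᴴ = C := by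
      rw [conjTranspose_eq_transpose_of_trivial, Matrix.transpose_mul,
        Matrix.diagonal_transpose, Matrix.mul_assoc, ← Matrix.mul_assoc
          (Matrix.diagonal (fun i => Real.sqrt (d i))), hdd, hCdef, Matrix.mul_assoc]
    rwa [he] at h
  have hC2 : C * C = Xᵀ * X := by
    simp only [hXdef, hCdef, Matrix.transpose_mul, Matrix.transpose_transpose,
      Matrix.diagonal_transpose, Matrix.mul_assoc]
    rw [cancel hV, cancel hU]
  have hsqrt : (Matrix.posSemidef_conjTranspose_mul_self X).sqrt = C :=
    (hC.eq_sqrt_of_sq_eq (Matrix.posSemidef_conjTranspose_mul_self X)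
      (by rw [pow_two]; exact hC2)).symm
  have hN : nuclearNorm X = C.trace := by
    unfold nuclearNorm
    exact congrArg Matrix.trace hsqrt
  have hBX : Bᵀ * X = C := by
    simp only [hBdef, hXdef, hCdef, Matrix.transpose_mul, Matrix.transpose_transpose,
      Matrix.mul_assoc]
    rw [cancel hU]
  have hBB : Matrix.PosSemidef (1 - Bᵀ * B) := by
    have hP : Bᵀ * B = V * Vᵀ := by
      simp only [hBdef, Matrix.transpose_mul, Matrix.transpose_transpose, Matrix.mul_assoc]
      rw [cancel hU]
    rw [hP]
    have h1 : (1 - V * Vᵀ)ᵀ * (1 - V * Vᵀ) = 1 - V * Vᵀ := by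
      have hPt : (1 - V * Vᵀ)ᵀ = 1 - V * Vᵀ := by
        rw [Matrix.transpose_sub, Matrix.transpose_one, Matrix.transpose_mul,
          Matrix.transpose_transpose]
      have hPP : V * Vᵀ * (V * Vᵀ) = V * Vᵀ := by
        rw [Matrix.mul_assoc, cancel hV]
      rw [hPt, Matrix.mul_sub, Matrix.mul_one, Matrix.sub_mul, Matrix.one_mul, hPP]
      abel
    have h2 := Matrix.posSemidef_conjTranspose_mul_self (1 - V * Vᵀ)
    rw [conjTranspose_eq_transpose_of_trivial] at h2
    rwa [h1] at h2
  have goal_eq : nuclearNorm X + (Bᵀ * (Y - X)).trace = (Bᵀ * Y).trace := by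
    rw [hN, Matrix.mul_sub, Matrix.trace_sub, hBX]
    ring
  rw [goal_eq]
  exact trace_le_nuclear B Y hBB
end

section
/- Let G ∈ ℝ^{m×n} have reduced singular value decomposition G = U Σ Vᵀ, where U ∈ ℝ^{m×r} and V ∈ ℝ^{n×r} are semi-orthogonal and Σ ∈ ℝ^{r×r} is diagonal with strictly positive diagonal entries. Then, with vec denoting column-stacking vectorization, (V ⊗ U)(Σ^{−1/2} ⊗ Σ^{−1/2})(V ⊗ U)ᵀ · vec(G) = vec(U Vᵀ). In other words, applying the inverse of the Kronecker-factored preconditioner (V Σ² Vᵀ ⊗ U Σ² Uᵀ)^{1/4} restricted to the range of V ⊗ U to the vectorized gradient produces the spectrally normalized direction U Vᵀ. -/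
open Matrix
open scoped Kronecker

/-- Column-stacking vectorization: `vec(X)_{(j,i)} = X i j`. -/
def vec {m n : ℕ} (X : Matrix (Fin m) (Fin n) ℝ) : Fin n × Fin m → ℝ :=
  fun p => X p.2 p.1

lemma vec_kron {m n p q : ℕ} (A : Matrix (Fin p) (Fin n) ℝ) (B : Matrix (Fin q) (Fin m) ℝ)
    (X : Matrix (Fin m) (Fin n) ℝ) :
    (A ⊗ₖ B).mulVec (_root_.vec X) = _root_.vec (B * X * Aᵀ) := by
  funext ⟨i₁, i₂⟩
  simp only [mulVec, dotProduct, _root_.vec, Matrix.mul_apply, kroneckerMap_apply,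
    transpose_apply, Fintype.sum_prod_type, Finset.sum_mul]
  exact Finset.sum_congr rfl fun j₁ _ => Finset.sum_congr rfl fun j₂ _ => by ring

theorem preconditioned_gradient_is_spectrally_normalized
    {m n r : ℕ}
    (U : Matrix (Fin m) (Fin r) ℝ) (V : Matrix (Fin n) (Fin r) ℝ)
    (hU : Uᵀ * U = 1) (hV : Vᵀ * V = 1)
    (d : Fin r → ℝ) (hd : ∀ i, 0 < d i)
    (G : Matrix (Fin m) (Fin n) ℝ)
    (hG : G = U * Matrix.diagonal d * Vᵀ) :
    ((V ⊗ₖ U) * ((Matrix.diagonal fun i => (Real.sqrt (d i))⁻¹) ⊗ₖ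
        (Matrix.diagonal fun i => (Real.sqrt (d i))⁻¹)) * (V ⊗ₖ U)ᵀ).mulVec (_root_.vec G)
      = _root_.vec (U * Vᵀ) := by
  rw [← Matrix.mulVec_mulVec, ← Matrix.mulVec_mulVec,
    ← Matrix.kroneckerMap_transpose, vec_kron, vec_kron, vec_kron]
  have key : Uᵀ * G * Vᵀᵀ = Matrix.diagonal d := by
    rw [hG, transpose_transpose]
    calc Uᵀ * (U * Matrix.diagonal d * Vᵀ) * V
        = (Uᵀ * U) * Matrix.diagonal d * (Vᵀ * V) := by simp only [Matrix.mul_assoc]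
      _ = Matrix.diagonal d := by rw [hU, hV, Matrix.one_mul, Matrix.mul_one]
  rw [key]
  have mid : (Matrix.diagonal fun i => (Real.sqrt (d i))⁻¹) * Matrix.diagonal d *
      (Matrix.diagonal fun i => (Real.sqrt (d i))⁻¹)ᵀ = (1 : Matrix (Fin r) (Fin r) ℝ) := by
    rw [Matrix.diagonal_transpose, Matrix.diagonal_mul_diagonal, Matrix.diagonal_mul_diagonal]
    have : (fun i => (Real.sqrt (d i))⁻¹ * d i * (Real.sqrt (d i))⁻¹) = fun _ : Fin r => (1:ℝ) := by
      funext i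
      have h0 : Real.sqrt (d i) ≠ 0 := ne_of_gt (Real.sqrt_pos.mpr (hd i))
      field_simp
      rw [Real.sq_sqrt (hd i).le]
    rw [this, Matrix.diagonal_one]
  rw [mid, Matrix.mul_one]
end
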